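/- Let L be a symmetric Leibniz algebra that is an A-algebra (every nilpotent subalgebra is abelian). Then the Lie algebra L/I is also an A-algebra. -/

import Mathlib

namespace LeibnizPaper

variable {F L : Type*} [Field F] [AddCommGroup L] [Module F L]

/-- The right Leibniz identity. -/
def IsRightLeibniz (br : L →ₗ[F] L →ₗ[F] L) : Prop :=
  ∀ x y z : L, br x (br y z) = br (br x y) z - br (br x z) y

/-- The left Leibniz identity. -/
def IsLeftLeibniz (br : L →ₗ[F] L →ₗ[F] L) : Prop :=
  ∀ x y z : L, br x (br y z) = br (br x y) z + br y (br x z)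

/-- Symmetric Leibniz algebra: both identities together with `[[x,y],[x,y]] = 0`. -/
def IsSymmetricLeibniz (br : L →ₗ[F] L →ₗ[F] L) : Prop :=
  IsRightLeibniz br ∧ IsLeftLeibniz br ∧ ∀ x y : L, br (br x y) (br x y) = 0

def IsSubalg (br : L →ₗ[F] L →ₗ[F] L) (U : Submodule F L) : Prop :=
  ∀ x ∈ U, ∀ y ∈ U, br x y ∈ U

def IsIdeal (br : L →ₗ[F] L →ₗ[F] L) (U : Submodule F L) : Prop :=
  ∀ x ∈ U, ∀ y : L, br x y ∈ U ∧ br y x ∈ U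

/-- `U` is an ideal of the subalgebra `A`. -/
def IsIdealIn (br : L →ₗ[F] L →ₗ[F] L) (A U : Submodule F L) : Prop :=
  U ≤ A ∧ ∀ x ∈ U, ∀ y ∈ A, br x y ∈ U ∧ br y x ∈ U

/-- The subspace spanned by all products of an element of `A` with an element of `B`. -/
def brSpan (br : L →ₗ[F] L →ₗ[F] L) (A B : Submodule F L) : Submodule F L :=
  Submodule.span F {z | ∃ a ∈ A, ∃ b ∈ B, z = br a b}

def derSeries (br : L →ₗ[F] L →ₗ[F] L) (U : Submodule F L) : ℕ → Submodule F L
  | 0 => U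
  | n+1 => brSpan br (derSeries br U n) (derSeries br U n)

def lcSeries (br : L →ₗ[F] L →ₗ[F] L) (U : Submodule F L) : ℕ → Submodule F L
  | 0 => U
  | n+1 => brSpan br (lcSeries br U n) U

def IsSolvable (br : L →ₗ[F] L →ₗ[F] L) (U : Submodule F L) : Prop :=
  ∃ n, derSeries br U n = ⊥

def IsNilpotentSub (br : L →ₗ[F] L →ₗ[F] L) (U : Submodule F L) : Prop :=
  ∃ n, lcSeries br U n = ⊥

/-- `G` is the radical (largest solvable ideal). -/
def IsRadical (br : L →ₗ[F] L →ₗ[F] L) (G : Submodule F L) : Prop :=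
  IsIdeal br G ∧ IsSolvable br G ∧ ∀ J, IsIdeal br J → IsSolvable br J → J ≤ G

/-- `G` is the radical of the subalgebra `A`. -/
def IsRadicalIn (br : L →ₗ[F] L →ₗ[F] L) (A G : Submodule F L) : Prop :=
  IsIdealIn br A G ∧ IsSolvable br G ∧ ∀ J, IsIdealIn br A J → IsSolvable br J → J ≤ G

/-- `N` is the nilradical (largest nilpotent ideal). -/
def IsNilradical (br : L →ₗ[F] L →ₗ[F] L) (N : Submodule F L) : Prop :=
  IsIdeal br N ∧ IsNilpotentSub br N ∧ ∀ J, IsIdeal br J → IsNilpotentSub br J → J ≤ N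

/-- The subalgebra `S` is semisimple: it has no nonzero solvable ideals. -/
def IsSemisimpleIn (br : L →ₗ[F] L →ₗ[F] L) (S : Submodule F L) : Prop :=
  ∀ J, IsIdealIn br S J → IsSolvable br J → J = ⊥

/-- The Leibniz kernel `I`, the span of all squares. -/
def kernelIdeal (br : L →ₗ[F] L →ₗ[F] L) : Submodule F L :=
  Submodule.span F {y | ∃ x, y = br x x}

def IsMaxSubalg (br : L →ₗ[F] L →ₗ[F] L) (M : Submodule F L) : Prop :=
  IsSubalg br M ∧ M ≠ ⊤ ∧ ∀ M', IsSubalg br M' → M ≤ M' → M' ≠ ⊤ → M' = M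

/-- `φ(L) = 0`: every ideal contained in all maximal subalgebras is trivial. -/
def IsPhiFree (br : L →ₗ[F] L →ₗ[F] L) : Prop :=
  ∀ J, IsIdeal br J → (∀ M, IsMaxSubalg br M → J ≤ M) → J = ⊥

/-- `P` is the Frattini ideal: the largest ideal contained in every maximal subalgebra. -/
def IsFrattiniIdeal (br : L →ₗ[F] L →ₗ[F] L) (P : Submodule F L) : Prop :=
  IsIdeal br P ∧ (∀ M, IsMaxSubalg br M → P ≤ M) ∧
    ∀ J, IsIdeal br J → (∀ M, IsMaxSubalg br M → J ≤ M) → J ≤ P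

/-- `A` is invariant under left and right multiplication by elements of `Sg`. -/
def IsSubBimodule (br : L →ₗ[F] L →ₗ[F] L) (Sg A : Submodule F L) : Prop :=
  ∀ a ∈ A, ∀ s ∈ Sg, br a s ∈ A ∧ br s a ∈ A

/-- `L = N ∔ Sg` with `Sg` a Lie subalgebra and the nilradical `N` a completely
reducible `Sg`-bimodule. -/
def IsAlmostReductive (br : L →ₗ[F] L →ₗ[F] L) (N Sg : Submodule F L) : Prop :=
  IsNilradical br N ∧ IsSubalg br Sg ∧ (∀ x ∈ Sg, br x x = 0) ∧
    N ⊓ Sg = ⊥ ∧ N ⊔ Sg = ⊤ ∧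
    ∀ A ≤ N, IsSubBimodule br Sg A → ∃ B ≤ N, IsSubBimodule br Sg B ∧ A ⊓ B = ⊥ ∧ A ⊔ B = N

def IsAbelianSub (br : L →ₗ[F] L →ₗ[F] L) (U : Submodule F L) : Prop :=
  ∀ x ∈ U, ∀ y ∈ U, br x y = 0

def IsMinAbelianIdeal (br : L →ₗ[F] L →ₗ[F] L) (A : Submodule F L) : Prop :=
  IsIdeal br A ∧ A ≠ ⊥ ∧ IsAbelianSub br A ∧
    ∀ B, IsIdeal br B → B ≤ A → B ≠ ⊥ → B = A

/-- The abelian socle: the sum of the minimal abelian ideals. -/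
def abelianSocle (br : L →ₗ[F] L →ₗ[F] L) : Submodule F L :=
  sSup {A | IsMinAbelianIdeal br A}

/-- An algebra is almost algebraic if the algebra of its right multiplication operators
contains the semisimple and nilpotent Jordan components of each of its elements. -/
def IsAlmostAlgebraicBr (br : L →ₗ[F] L →ₗ[F] L) : Prop :=
  ∀ f ∈ Set.range br.flip, ∃ s ∈ Set.range br.flip, ∃ n ∈ Set.range br.flip,
    f = s + n ∧ Module.End.IsSemisimple s ∧ IsNilpotent n ∧ Commute s n

/-- Every nilpotent subalgebra is abelian. -/
def IsAAlgebra (br : L →ₗ[F] L →ₗ[F] L) : Prop :=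
  ∀ U, IsSubalg br U → IsNilpotentSub br U → IsAbelianSub br U

/-- The commutator bracket, as a bilinear map on an associative algebra. -/
def commBr (F E : Type*) [Field F] [Ring E] [Algebra F E] : E →ₗ[F] E →ₗ[F] E :=
  LinearMap.mul F E - (LinearMap.mul F E).flip

/-- `brSpan` is monotone in both arguments. -/
lemma brSpan_mono {M : Type*} [AddCommGroup M] [Module F M]
    (br : M →ₗ[F] M →ₗ[F] M) {A A' B B' : Submodule F M}
    (hA : A ≤ A') (hB : B ≤ B') : brSpan br A B ≤ brSpan br A' B' := by
  apply Submodule.span_mono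
  rintro _ ⟨a, ha, b, hb, rfl⟩
  exact ⟨a, hA ha, b, hB hb, rfl⟩

/-- In a symmetric Leibniz algebra, the kernel ideal is central. -/
lemma kernel_central (br : L →ₗ[F] L →ₗ[F] L) (hsym : IsSymmetricLeibniz br) :
    ∀ i ∈ kernelIdeal br, ∀ y : L, br i y = 0 ∧ br y i = 0 := by
  obtain ⟨hR, hL, _⟩ := hsym
  have h1 : ∀ x y : L, br y (br x x) = 0 := fun x y => by rw [hR y x x, sub_self]
  have h2 : ∀ x y : L, br (br x x) y = 0 := by
    intro x y
    have h := (hR x y x).symm.trans (hL x y x)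
    rw [sub_eq_add_neg] at h
    have h' := add_left_cancel h
    rw [h1 x y] at h'
    exact neg_eq_zero.mp h'
  intro i hi
  induction hi using Submodule.span_induction with
  | mem z hz =>
    obtain ⟨x, rfl⟩ := hz
    exact fun y => ⟨h2 x y, h1 x y⟩
  | zero => intro y; simp
  | add a b _ _ ha hb =>
    intro y
    constructor
    · simp [map_add, LinearMap.add_apply, (ha y).1, (hb y).1]
    · simp [map_add, (ha y).2, (hb y).2]
  | smul c a _ ha =>
    intro y
    constructor
    · simp [map_smul, LinearMap.smul_apply, (ha y).1]
    · simp [map_smul, (ha y).2]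

theorem symmetric_AAlgebra_quot (br : L →ₗ[F] L →ₗ[F] L)
    (hsym : IsSymmetricLeibniz br) (hA : IsAAlgebra br)
    (brQ : (L ⧸ kernelIdeal br) →ₗ[F] (L ⧸ kernelIdeal br) →ₗ[F] (L ⧸ kernelIdeal br))
    (hbrQ : ∀ x y : L, brQ ((kernelIdeal br).mkQ x) ((kernelIdeal br).mkQ y) = (kernelIdeal br).mkQ (br x y)) :
    IsAAlgebra brQ := by
  have hcent := kernel_central br hsym
  intro U hUsub hUnil
  let π : L →ₗ[F] L ⧸ kernelIdeal br := (kernelIdeal br).mkQ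
  let K : Submodule F L := U.comap π
  have hπK : K.map π = U :=
    Submodule.map_comap_eq_of_surjective (kernelIdeal br).mkQ_surjective U
  have hKsub : IsSubalg br K := by
    intro x hx y hy
    simp only [K, Submodule.mem_comap] at *
    rw [← hbrQ]
    exact hUsub _ hx _ hy
  have hmap : ∀ A B : Submodule F L,
      (brSpan br A B).map π ≤ brSpan brQ (A.map π) (B.map π) := by
    intro A B
    rw [brSpan, Submodule.map_span]
    apply Submodule.span_le.mpr
    rintro _ ⟨z, ⟨a, ha, b, hb, rfl⟩, rfl⟩
    exact Submodule.subset_span ⟨π a, ⟨a, ha, rfl⟩, π b, ⟨b, hb, rfl⟩, (hbrQ a b).symm⟩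
  have hlc : ∀ n, (lcSeries br K n).map π ≤ lcSeries brQ U n := by
    intro n
    induction n with
    | zero => rw [lcSeries, lcSeries, hπK]
    | succ n ih =>
      refine le_trans (hmap _ _) ?_
      rw [lcSeries]
      exact brSpan_mono brQ ih (le_of_eq hπK)
  obtain ⟨n, hn⟩ := hUnil
  have hKI : lcSeries br K n ≤ kernelIdeal br := by
    have h := hlc n
    rw [hn, Submodule.map_le_iff_le_comap] at h
    refine le_trans h ?_
    rw [Submodule.comap_bot]
    exact le_of_eq (Submodule.ker_mkQ _)
  have hKnil : IsNilpotentSub br K := by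
    refine ⟨n + 1, le_bot_iff.mp ?_⟩
    rw [lcSeries]
    apply Submodule.span_le.mpr
    rintro _ ⟨a, ha, b, hb, rfl⟩
    have := (hcent a (hKI ha) b).1
    simp [this]
  have hKab : IsAbelianSub br K := hA K hKsub hKnil
  intro u hu v hv
  obtain ⟨x, rfl⟩ := (kernelIdeal br).mkQ_surjective u
  obtain ⟨y, rfl⟩ := (kernelIdeal br).mkQ_surjective v
  have hx : x ∈ K := by simpa [K, π, Submodule.mem_comap] using hu
  have hy : y ∈ K := by simpa [K, π, Submodule.mem_comap] using hv
  rw [hbrQ, hKab x hx y hy, map_zero]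

end LeibnizPaper
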